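/- arXiv:1301.4146 — 4 statements merged into one kernel-verified Lean document; each statement's English description precedes it below -/
import Mathlib

section
/- Let h : ℝ → ℝ and let ξ, ξ' > 0, δ > 0, τ₀ > 0, 0 < γ < 2 and 0 < λ < 1 be constants such that ξ/τ² ≤ h(τ) ≤ ξ'/τ^γ for all τ ≥ τ₀. Then there exists a positive integer N such that there are infinitely many positive integers n with N·n·δ ≥ τ₀ and h((N+1)·n·δ) ≥ λ·h(N·n·δ). -/
/-!
Suppose that for every `N` the ratio `h((N+1)nδ) / h(Nnδ)` eventually stays below `λ`. Fix `B`
with `λ^B < 1/4`; chaining these ratios for `N = B, …, 2B-1` gives `h(2Bnδ) ≤ λ^B h(Bnδ)` for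
large `n`, so `h` decays by a factor better than `1/4` each time its argument doubles. That is
incompatible with the lower bound `ξ/τ²`, which only loses a factor `1/4` per doubling.
-/

open Filter

lemma le_pow_mul_of_forall_Ico_le {φ : ℕ → ℝ} {lam : ℝ} (hlam : 0 ≤ lam) {B n : ℕ}
    (hstep : ∀ N ∈ Finset.Ico B (2 * B), φ ((N + 1) * n) ≤ lam * φ (N * n)) :
    φ (B * (2 * n)) ≤ lam ^ B * φ (B * n) := by
  have := le_geom (u := fun i ↦ φ ((B + i) * n)) hlam B fun i hi ↦ by
    simpa [add_assoc] using hstep (B + i) (Finset.mem_Ico.2 ⟨by omega, by omega⟩)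
  simpa [two_mul, add_mul, mul_add] using this

lemma frequently_lt_div_sq_of_eventually_le_doubling {ψ : ℕ → ℝ} {q c : ℝ} (hq0 : 0 ≤ q)
    (hq : 4 * q < 1) (hc : 0 < c) (hdec : ∀ᶠ n in atTop, ψ (2 * n) ≤ q * ψ n) :
    ∃ᶠ n in atTop, ψ n < c / (n : ℝ) ^ 2 := by
  obtain ⟨n₀, hn₀⟩ := eventually_atTop.1 (hdec.and (eventually_ge_atTop 1))
  have hn₀one : 1 ≤ n₀ := (hn₀ n₀ le_rfl).2
  have hgeom (j : ℕ) : ψ (2 ^ j * n₀) ≤ q ^ j * ψ n₀ := by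
    simpa using le_geom (u := fun j ↦ ψ (2 ^ j * n₀)) hq0 j fun k _ ↦ by
      simpa [pow_succ, mul_assoc, mul_comm, mul_left_comm] using
        (hn₀ (2 ^ k * n₀) (le_mul_of_one_le_left (Nat.zero_le _) Nat.one_le_two_pow)).1
  have hsmall : ∀ᶠ j in atTop, (4 * q) ^ j * (ψ n₀ * (n₀ : ℝ) ^ 2) < c := by
    have := (tendsto_pow_atTop_nhds_zero_of_lt_one (by positivity) hq).mul_const
      (ψ n₀ * (n₀ : ℝ) ^ 2)
    rw [zero_mul] at this
    exact this.eventually (gt_mem_nhds hc)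
  have hlarge : Tendsto (fun j : ℕ ↦ 2 ^ j * n₀) atTop atTop :=
    tendsto_atTop_mono (fun j ↦ Nat.lt_two_pow_self.le.trans (Nat.le_mul_of_pos_right _ hn₀one))
      tendsto_id
  refine hlarge.frequently (hsmall.frequently.mono fun j hj ↦ ?_)
  calc ψ (2 ^ j * n₀) ≤ q ^ j * ψ n₀ := hgeom j
    _ < c / (4 ^ j * (n₀ : ℝ) ^ 2) := by
      rw [lt_div_iff₀ (by positivity)]
      calc q ^ j * ψ n₀ * (4 ^ j * (n₀ : ℝ) ^ 2) = (4 * q) ^ j * (ψ n₀ * (n₀ : ℝ) ^ 2) := by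
            ring
        _ < c := hj
    _ = c / ((2 ^ j * n₀ : ℕ) : ℝ) ^ 2 := by
      push_cast; rw [mul_pow, ← pow_mul, mul_comm j 2, pow_mul]; norm_num

theorem exists_frequently_le_of_eventually_div_sq_le {φ : ℕ → ℝ} {c lam : ℝ} (hc : 0 < c)
    (hlam0 : 0 ≤ lam) (hlam1 : lam < 1) (hlow : ∀ᶠ m : ℕ in atTop, c / (m : ℝ) ^ 2 ≤ φ m) :
    ∃ N, 0 < N ∧ ∃ᶠ n in atTop, lam * φ (N * n) ≤ φ ((N + 1) * n) := by
  by_contra! hcon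
  obtain ⟨B, hB⟩ := exists_pow_lt_of_lt_one (by norm_num : (0 : ℝ) < 1 / 4) hlam1
  have hBpos : 0 < B := Nat.pos_of_ne_zero fun hB0 ↦ by norm_num [hB0] at hB
  have hdec : ∀ᶠ n in atTop, φ (B * (2 * n)) ≤ lam ^ B * φ (B * n) := by
    filter_upwards [(Finset.eventually_all (Finset.Ico B (2 * B))).2 fun N hN ↦
      hcon N (hBpos.trans_le (Finset.mem_Ico.1 hN).1)] with n hn
    exact le_pow_mul_of_forall_Ico_le hlam0 fun N hN ↦ (hn N hN).le
  have hlowB : ∀ᶠ n : ℕ in atTop, c / (B : ℝ) ^ 2 / (n : ℝ) ^ 2 ≤ φ (B * n) := by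
    filter_upwards [(tendsto_id.const_mul_atTop' hBpos).eventually hlow] with n hn
    simpa [mul_pow, div_div] using hn
  obtain ⟨n, hlt, hle⟩ := ((frequently_lt_div_sq_of_eventually_le_doubling
    (ψ := fun n ↦ φ (B * n)) (q := lam ^ B) (c := c / (B : ℝ) ^ 2) (by positivity)
    (by linarith) (by positivity) hdec).and_eventually hlowB).exists
  exact hlt.not_ge hle

theorem stmt0_general (h : ℝ → ℝ) (ξ δ τ₀ lam : ℝ)
    (hξ : 0 < ξ) (hδ : 0 < δ) (hlam0 : 0 < lam) (hlam1 : lam < 1)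
    (hlow : ∀ τ : ℝ, τ₀ ≤ τ → ξ / τ ^ 2 ≤ h τ) :
    ∃ N : ℕ, 0 < N ∧
      {n : ℕ | 0 < n ∧ τ₀ ≤ (N : ℝ) * n * δ ∧
        lam * h ((N : ℝ) * n * δ) ≤ h (((N : ℝ) + 1) * n * δ)}.Infinite := by
  have hlarge (M : ℕ) (hM : 0 < M) : ∀ᶠ n : ℕ in atTop, τ₀ ≤ (M : ℝ) * n * δ :=
    (tendsto_natCast_atTop_atTop.const_mul_atTop (by exact_mod_cast hM)
      |>.atTop_mul_const hδ).eventually_ge_atTop τ₀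
  have hlowδ : ∀ᶠ m : ℕ in atTop, ξ / δ ^ 2 / (m : ℝ) ^ 2 ≤ h (m * δ) := by
    filter_upwards [hlarge 1 one_pos] with m hm
    rw [div_div, mul_comm (δ ^ 2), ← mul_pow]
    exact hlow _ (by simpa using hm)
  obtain ⟨N, hN, hfreq⟩ := exists_frequently_le_of_eventually_div_sq_le (φ := fun m ↦ h (m * δ))
    (by positivity) hlam0.le hlam1 hlowδ
  refine ⟨N, hN, Nat.frequently_atTop_iff_infinite.1 ?_⟩
  refine (hfreq.and_eventually ((eventually_gt_atTop 0).and (hlarge N hN))).mono ?_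
  rintro n ⟨hratio, hpos, hτ⟩
  exact ⟨hpos, hτ, by simpa [mul_assoc] using hratio⟩

/-- If `ξ/τ² ≤ h τ ≤ ξ'/τ^γ` for all `τ ≥ τ₀` (with `0 < γ < 2`,
`0 < λ < 1`, `δ > 0`), then there is a positive integer `N` with infinitely many
positive integers `n` such that `N·n·δ ≥ τ₀` and `h((N+1)nδ) ≥ λ·h(Nnδ)`. -/
theorem stmt0 (h : ℝ → ℝ) (ξ ξ' δ τ₀ γ lam : ℝ)
    (hξ : 0 < ξ) (hξ' : 0 < ξ') (hδ : 0 < δ) (hτ₀ : 0 < τ₀)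
    (hγ0 : 0 < γ) (hγ2 : γ < 2) (hlam0 : 0 < lam) (hlam1 : lam < 1)
    (hlow : ∀ τ : ℝ, τ₀ ≤ τ → ξ / τ ^ 2 ≤ h τ)
    (hup : ∀ τ : ℝ, τ₀ ≤ τ → h τ ≤ ξ' / τ ^ γ) :
    ∃ N : ℕ, 0 < N ∧
      {n : ℕ | 0 < n ∧ τ₀ ≤ (N : ℝ) * n * δ ∧
        lam * h ((N : ℝ) * n * δ) ≤ h (((N : ℝ) + 1) * n * δ)}.Infinite :=
  stmt0_general h ξ δ τ₀ lam hξ hδ hlam0 hlam1 hlow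
end

section
/- Let R > 0, σ > 0 and φ ∈ [0, π/2], and set y = R·σ·(√(1 + (R²/σ²)·cos²φ) − sinφ)/(R² + σ²). Then y ≥ (R·σ/(R² + σ²)) · (min(R²/σ², 1)/4) · cos²φ. -/
/-!
Since `cos² φ = (1 - sin φ)(1 + sin φ) ≤ 2 (1 - sin φ)` and the square root is at least `1`,
the bracket `√(1 + (R²/σ²) cos² φ) - sin φ` is at least `cos² φ / 2`, which already dominates
`min (R²/σ²) 1 / 4 · cos² φ`.
-/

open Real

namespace Real

lemma cos_sq_div_two_le_one_sub_sin (x : ℝ) : cos x ^ 2 / 2 ≤ 1 - sin x := by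
  nlinarith [sin_sq_add_cos_sq x, sin_le_one x, neg_one_le_sin x]

lemma cos_sq_div_two_le_sqrt_sub_sin {b : ℝ} (hb : 0 ≤ b) (x : ℝ) :
    cos x ^ 2 / 2 ≤ √(1 + b * cos x ^ 2) - sin x := by
  have hsqrt : 1 ≤ √(1 + b * cos x ^ 2) := one_le_sqrt.mpr (by nlinarith [sq_nonneg (cos x)])
  linarith [cos_sq_div_two_le_one_sub_sin x]

end Real

theorem stmt10_general (R σ φ : ℝ) (hR : 0 < R) (hσ : 0 < σ) :
    R * σ / (R ^ 2 + σ ^ 2) * (min (R ^ 2 / σ ^ 2) 1 / 4) * Real.cos φ ^ 2 ≤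
      R * σ * (Real.sqrt (1 + R ^ 2 / σ ^ 2 * Real.cos φ ^ 2) - Real.sin φ) /
        (R ^ 2 + σ ^ 2) := by
  have hbracket : min (R ^ 2 / σ ^ 2) 1 / 4 * cos φ ^ 2 ≤
      √(1 + R ^ 2 / σ ^ 2 * cos φ ^ 2) - sin φ := by
    have hmin : min (R ^ 2 / σ ^ 2) 1 / 4 * cos φ ^ 2 ≤ cos φ ^ 2 / 2 := by
      nlinarith [min_le_right (R ^ 2 / σ ^ 2) 1, sq_nonneg (cos φ)]
    exact hmin.trans (cos_sq_div_two_le_sqrt_sub_sin (by positivity) φ)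
  calc R * σ / (R ^ 2 + σ ^ 2) * (min (R ^ 2 / σ ^ 2) 1 / 4) * cos φ ^ 2
      = R * σ / (R ^ 2 + σ ^ 2) * (min (R ^ 2 / σ ^ 2) 1 / 4 * cos φ ^ 2) := by ring
    _ ≤ R * σ / (R ^ 2 + σ ^ 2) * (√(1 + R ^ 2 / σ ^ 2 * cos φ ^ 2) - sin φ) := by
      gcongr
    _ = R * σ * (√(1 + R ^ 2 / σ ^ 2 * cos φ ^ 2) - sin φ) / (R ^ 2 + σ ^ 2) := by ring

/-- With `R, σ > 0`, `φ ∈ [0, π/2]` and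
`y = Rσ(√(1 + (R²/σ²)cos²φ) − sinφ)/(R² + σ²)`, we have
`y ≥ (Rσ/(R² + σ²))·(min(R²/σ², 1)/4)·cos²φ`. -/
theorem stmt10 (R σ φ : ℝ) (hR : 0 < R) (hσ : 0 < σ)
    (hφ0 : 0 ≤ φ) (hφ1 : φ ≤ π / 2) :
    R * σ / (R ^ 2 + σ ^ 2) * (min (R ^ 2 / σ ^ 2) 1 / 4) * Real.cos φ ^ 2 ≤
      R * σ * (Real.sqrt (1 + R ^ 2 / σ ^ 2 * Real.cos φ ^ 2) - Real.sin φ) /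
        (R ^ 2 + σ ^ 2) :=
  stmt10_general R σ φ hR hσ
end

section
/- For all real numbers β > 0 and v > 0, ∫_{−π/2}^{π/2} (1/cosφ)·e^{−β v² tan²φ} dφ ≤ √π/(√β·v). -/
open Real
open MeasureTheory Set

/-! Substituting `w = tan φ` turns `dφ / cos² φ` into `dw` and the integrand into a Gaussian; since
`0 < cos φ ≤ 1`, the weight `1 / cos φ` is at most `1 / cos² φ`, so the integral is bounded by the
full Gaussian integral `√(π / (β v²))`. -/

section TanSubstitution

variable {E : Type*} [NormedAddCommGroup E] [NormedSpace ℝ E]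

lemma hasDerivWithinAt_tan_Ioo {x : ℝ} (hx : x ∈ Ioo (-(π / 2)) (π / 2)) :
    HasDerivWithinAt tan (cos x ^ 2)⁻¹ (Ioo (-(π / 2)) (π / 2)) x := by
  simpa only [one_div] using (hasDerivAt_tan (cos_pos_of_mem_Ioo hx).ne').hasDerivWithinAt

lemma abs_inv_cos_sq (x : ℝ) : |(cos x ^ 2)⁻¹| = (cos x ^ 2)⁻¹ :=
  abs_of_nonneg (by positivity)

lemma integrableOn_Ioo_inv_cos_sq_smul_comp_tan {g : ℝ → E} (hg : Integrable g) :
    IntegrableOn (fun x => (cos x ^ 2)⁻¹ • g (tan x)) (Ioo (-(π / 2)) (π / 2)) := by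
  have h := integrableOn_image_iff_integrableOn_abs_deriv_smul measurableSet_Ioo
    (fun _ hx => hasDerivWithinAt_tan_Ioo hx) injOn_tan g
  simp only [abs_inv_cos_sq, image_tan_Ioo, integrableOn_univ] at h
  exact h.1 hg

lemma integral_Ioo_inv_cos_sq_smul_comp_tan (g : ℝ → E) :
    ∫ x in Ioo (-(π / 2)) (π / 2), (cos x ^ 2)⁻¹ • g (tan x) = ∫ w, g w := by
  have h := integral_image_eq_integral_abs_deriv_smul measurableSet_Ioo
    (fun _ hx => hasDerivWithinAt_tan_Ioo hx) injOn_tan g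
  simp only [abs_inv_cos_sq, image_tan_Ioo, Measure.restrict_univ] at h
  exact h.symm

end TanSubstitution

lemma integral_inv_cos_mul_comp_tan_le {g : ℝ → ℝ} (hg : Integrable g) (hg0 : 0 ≤ g) :
    ∫ φ in (-(π / 2))..(π / 2), (cos φ)⁻¹ * g (tan φ) ≤ ∫ w, g w := by
  have hcos : ∀ᵐ φ ∂volume.restrict (Ioo (-(π / 2)) (π / 2)), 0 < cos φ :=
    (ae_restrict_mem measurableSet_Ioo).mono fun _ hφ => cos_pos_of_mem_Ioo hφ
  calc ∫ φ in (-(π / 2))..(π / 2), (cos φ)⁻¹ * g (tan φ)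
      = ∫ φ in Ioo (-(π / 2)) (π / 2), (cos φ)⁻¹ * g (tan φ) := by
        rw [intervalIntegral.integral_of_le (by linarith [pi_pos]), integral_Ioc_eq_integral_Ioo]
    _ ≤ ∫ φ in Ioo (-(π / 2)) (π / 2), (cos φ ^ 2)⁻¹ * g (tan φ) := by
        refine integral_mono_of_nonneg ?_ (integrableOn_Ioo_inv_cos_sq_smul_comp_tan hg) ?_
        · filter_upwards [hcos] with φ hφ
          exact mul_nonneg (inv_nonneg.2 hφ.le) (hg0 _)
        · filter_upwards [hcos] with φ hφ
          have hsec : (cos φ)⁻¹ ≤ (cos φ ^ 2)⁻¹ :=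
            inv_anti₀ (by positivity) (by nlinarith [cos_le_one φ])
          exact mul_le_mul_of_nonneg_right hsec (hg0 _)
    _ = ∫ w, g w := integral_Ioo_inv_cos_sq_smul_comp_tan g

/-- For `β, v > 0`,
`∫_{−π/2}^{π/2} (1/cosφ)·e^{−βv²tan²φ} dφ ≤ √π/(√β·v)`. -/
theorem stmt12 (β v : ℝ) (hβ : 0 < β) (hv : 0 < v) :
    ∫ φ in (-(π / 2))..(π / 2),
        (1 / Real.cos φ) * Real.exp (-β * v ^ 2 * Real.tan φ ^ 2) ≤
      Real.sqrt π / (Real.sqrt β * v) := by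
  have hexponent : ∀ w : ℝ, -β * v ^ 2 * w ^ 2 = -(β * v ^ 2) * w ^ 2 := fun _ => by ring
  have hgauss : ∫ w, exp (-(β * v ^ 2) * w ^ 2) = √π / (√β * v) := by
    rw [integral_gaussian, sqrt_div pi_pos.le, sqrt_mul hβ.le, sqrt_sq hv.le]
  simp only [hexponent, one_div]
  rw [← hgauss]
  exact integral_inv_cos_mul_comp_tan_le (integrable_exp_neg_mul_sq (by positivity))
    fun _ => (exp_pos _).le
end

section
/- Let (X, m) be a measure space with m(X) < ∞, let β > 0 and 0 < σ_min ≤ σ_max, and let σ : X → ℝ be measurable with σ_min ≤ σ(x) ≤ σ_max for all x ∈ X. Then for every τ ≥ σ_max·√β, m(X)·(σ_min³/(6τ²) − β·σ_max⁵/(20τ⁴)) ≤ ∫_X [σ(x)/(2β) − (τ/(2β^{3/2}))·∫₀^{√β·σ(x)/τ} e^{−u²} du] dm(x) ≤ m(X)·σ_max³/(6τ²). -/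
/-!
Substituting `t = √β σ / τ`, the integrand equals `τ / (2 β^{3/2}) · (t - ∫₀ᵗ e^{-u²} du)`.
The alternating Taylor bounds `1 - u² ≤ e^{-u²} ≤ 1 - u² + u⁴/2` integrate to
`t³/3 - t⁵/10 ≤ t - ∫₀ᵗ e^{-u²} du ≤ t³/3`, which turns into
`σ³/(6τ²) - βσ⁵/(20τ⁴) ≤ integrand ≤ σ³/(6τ²)`; integrating these pointwise bounds over
the finite measure space gives the claim.
-/

open MeasureTheory intervalIntegral Real

theorem Real.exp_neg_le_one_sub_add_sq_div_two {v : ℝ} (hv : 0 ≤ v) :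
    exp (-v) ≤ 1 - v + v ^ 2 / 2 := by
  have hmul : exp (-v) * exp v = 1 := by rw [← exp_add]; simp
  nlinarith [quadratic_le_exp_of_nonneg hv, exp_pos (-v), sq_nonneg v, sq_nonneg (v ^ 2)]

theorem cube_div_three_sub_le_sub_integral_exp_neg_sq {t : ℝ} (ht : 0 ≤ t) :
    t ^ 3 / 3 - t ^ 5 / 10 ≤ t - ∫ u in (0 : ℝ)..t, exp (-u ^ 2) := by
  have hpoly : (∫ u in (0 : ℝ)..t, (1 - u ^ 2 + u ^ 4 / 2)) = t - t ^ 3 / 3 + t ^ 5 / 10 := by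
    simp [intervalIntegral.integral_sub, intervalIntegral.integral_add, intervalIntegrable_pow,
      IntervalIntegrable.sub, intervalIntegral.integral_div]
    ring
  have hmono : (∫ u in (0 : ℝ)..t, exp (-u ^ 2)) ≤ ∫ u in (0 : ℝ)..t, (1 - u ^ 2 + u ^ 4 / 2) :=
    integral_mono_on ht ((by fun_prop : Continuous fun u : ℝ => exp (-u ^ 2)).intervalIntegrable _ _)
      ((by fun_prop : Continuous fun u : ℝ => 1 - u ^ 2 + u ^ 4 / 2).intervalIntegrable _ _)
      fun u _ => by nlinarith [exp_neg_le_one_sub_add_sq_div_two (sq_nonneg u)]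
  linarith

theorem sub_integral_exp_neg_sq_le {t : ℝ} (ht : 0 ≤ t) :
    t - ∫ u in (0 : ℝ)..t, exp (-u ^ 2) ≤ t ^ 3 / 3 := by
  have hpoly : (∫ u in (0 : ℝ)..t, (1 - u ^ 2)) = t - t ^ 3 / 3 := by
    simp [intervalIntegral.integral_sub, intervalIntegrable_pow]
    ring
  have hmono : (∫ u in (0 : ℝ)..t, (1 - u ^ 2)) ≤ ∫ u in (0 : ℝ)..t, exp (-u ^ 2) :=
    integral_mono_on ht ((by fun_prop : Continuous fun u : ℝ => 1 - u ^ 2).intervalIntegrable _ _)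
      ((by fun_prop : Continuous fun u : ℝ => exp (-u ^ 2)).intervalIntegrable _ _)
      fun u _ => by linarith [add_one_le_exp (-u ^ 2)]
  linarith

theorem integral_mem_Icc_of_forall_mem_Icc {X : Type*} [MeasurableSpace X] {m : Measure X}
    [IsFiniteMeasure m] {f : X → ℝ} (hf : AEStronglyMeasurable f m) {a b : ℝ}
    (hab : ∀ x, a ≤ f x ∧ f x ≤ b) :
    m.real Set.univ * a ≤ ∫ x, f x ∂m ∧ ∫ x, f x ∂m ≤ m.real Set.univ * b := by
  have hint : Integrable f m :=
    .of_bound hf (max |a| |b|) <| .of_forall fun x =>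
      abs_le_max_abs_abs (hab x).1 (hab x).2
  constructor
  · simpa using integral_mono (integrable_const a) hint fun x => (hab x).1
  · simpa using integral_mono hint (integrable_const b) fun x => (hab x).2

/-- The equilibrium measure `∫₀^{σ/τ} (σ/s - τ) s² e^{-βs²} ds` of the initial data along a flight
of length `σ` that do not reach a thermostat before time `τ`. -/
noncomputable def slowMass (β τ σ : ℝ) : ℝ :=
  σ / (2 * β) - (τ / (2 * β ^ ((3 : ℝ) / 2))) *
    ∫ u in (0 : ℝ)..(√β * σ / τ), exp (-u ^ 2)

theorem continuous_slowMass (β τ : ℝ) : Continuous (slowMass β τ) := by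
  have hprim : Continuous fun r : ℝ => ∫ u in (0 : ℝ)..r, exp (-u ^ 2) :=
    continuous_primitive
      (fun a b => (by fun_prop : Continuous fun u : ℝ => exp (-u ^ 2)).intervalIntegrable a b) 0
  unfold slowMass
  fun_prop

theorem slowMass_eq {β τ : ℝ} (hβ : 0 < β) (hτ : τ ≠ 0) (σ : ℝ) :
    slowMass β τ σ = τ / (2 * √β ^ 3) *
      (√β * σ / τ - ∫ u in (0 : ℝ)..(√β * σ / τ), exp (-u ^ 2)) := by
  have hs : 0 < √β := sqrt_pos.mpr hβ
  rw [slowMass, rpow_div_two_eq_sqrt 3 hβ.le, rpow_ofNat, mul_sub]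
  congr 1
  nth_rw 1 [← sq_sqrt hβ.le]
  field_simp

theorem slowMass_le {β τ σ : ℝ} (hβ : 0 < β) (hτ : 0 < τ) (hσ : 0 ≤ σ) :
    slowMass β τ σ ≤ σ ^ 3 / (6 * τ ^ 2) := by
  have hs : 0 < √β := sqrt_pos.mpr hβ
  rw [slowMass_eq hβ hτ.ne']
  calc _ ≤ τ / (2 * √β ^ 3) * ((√β * σ / τ) ^ 3 / 3) := by
        gcongr
        exact sub_integral_exp_neg_sq_le (by positivity)
    _ = σ ^ 3 / (6 * τ ^ 2) := by field_simp; ring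

theorem le_slowMass {β τ σ : ℝ} (hβ : 0 < β) (hτ : 0 < τ) (hσ : 0 ≤ σ) :
    σ ^ 3 / (6 * τ ^ 2) - β * σ ^ 5 / (20 * τ ^ 4) ≤ slowMass β τ σ := by
  have hs : 0 < √β := sqrt_pos.mpr hβ
  rw [slowMass_eq hβ hτ.ne']
  calc σ ^ 3 / (6 * τ ^ 2) - β * σ ^ 5 / (20 * τ ^ 4)
      = τ / (2 * √β ^ 3) * ((√β * σ / τ) ^ 3 / 3 - (√β * σ / τ) ^ 5 / 10) := by
        nth_rw 1 [← sq_sqrt hβ.le]; field_simp; ring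
    _ ≤ _ := mul_le_mul_of_nonneg_left
        (cube_div_three_sub_le_sub_integral_exp_neg_sq (by positivity)) (by positivity)

/-- For a finite measure space `(X, m)`, `β > 0`,
`0 < σ_min ≤ σ_max`, a measurable `σ : X → ℝ` with `σ_min ≤ σ(x) ≤ σ_max`, and
`τ ≥ σ_max·√β`:
`m(X)·(σ_min³/(6τ²) − βσ_max⁵/(20τ⁴)) ≤ ∫_X [σ(x)/(2β) − (τ/(2β^{3/2}))·∫₀^{√βσ(x)/τ} e^{−u²} du] dm ≤ m(X)·σ_max³/(6τ²)`. -/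
theorem stmt19 {X : Type*} [MeasurableSpace X] (m : Measure X) [IsFiniteMeasure m]
    (β σmin σmax : ℝ) (hβ : 0 < β) (hσmin : 0 < σmin) (hσ : σmin ≤ σmax)
    (σ : X → ℝ) (hσmeas : Measurable σ)
    (hσb : ∀ x : X, σmin ≤ σ x ∧ σ x ≤ σmax)
    (τ : ℝ) (hτ : σmax * Real.sqrt β ≤ τ) :
    (m Set.univ).toReal * (σmin ^ 3 / (6 * τ ^ 2) - β * σmax ^ 5 / (20 * τ ^ 4)) ≤
        (∫ x, (σ x / (2 * β) -
            (τ / (2 * β ^ ((3 : ℝ) / 2))) *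
              ∫ u in (0 : ℝ)..(Real.sqrt β * σ x / τ), Real.exp (-u ^ 2)) ∂m) ∧
      (∫ x, (σ x / (2 * β) -
          (τ / (2 * β ^ ((3 : ℝ) / 2))) *
            ∫ u in (0 : ℝ)..(Real.sqrt β * σ x / τ), Real.exp (-u ^ 2)) ∂m) ≤
        (m Set.univ).toReal * (σmax ^ 3 / (6 * τ ^ 2)) := by
  have hτ0 : 0 < τ := lt_of_lt_of_le (by positivity [hσmin.trans_le hσ]) hτ
  refine integral_mem_Icc_of_forall_mem_Icc (f := fun x => slowMass β τ (σ x))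
    ((continuous_slowMass β τ).measurable.comp hσmeas).aestronglyMeasurable fun x => ?_
  obtain ⟨hlo, hhi⟩ := hσb x
  have hσx : 0 ≤ σ x := hσmin.le.trans hlo
  constructor
  · calc σmin ^ 3 / (6 * τ ^ 2) - β * σmax ^ 5 / (20 * τ ^ 4)
        ≤ σ x ^ 3 / (6 * τ ^ 2) - β * σ x ^ 5 / (20 * τ ^ 4) := by gcongr
      _ ≤ slowMass β τ (σ x) := le_slowMass hβ hτ0 hσx
  · exact (slowMass_le hβ hτ0 hσx).trans (by gcongr)
end
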